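/- Let p be an odd prime, a a quadratic non-residue mod p, f(x) = x_1² − a x_2² − p x_3² + a p x_4², and let φ : Q_p⁴ → C be a Bruhat–Schwartz function. For Re(α) > 0, the integral ∫_{Q_p⁴} (φ(x) − φ(0)) |f(x)|_p^{−α−2} d⁴x converges absolutely. -/

import Mathlib

open MeasureTheory Complex Classical Filter

variable (p : ℕ) [Fact p.Prime]

noncomputable instance : MeasurableSpace ℚ_[p] := borel _
instance : BorelSpace ℚ_[p] := ⟨rfl⟩
noncomputable instance (n : ℕ) : MeasurableSpace (Fin n → ℚ_[p]) := borel _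
instance (n : ℕ) : BorelSpace (Fin n → ℚ_[p]) := ⟨rfl⟩

/-- Haar measure on `ℚ_p` normalized so that `ℤ_p` (the closed unit ball) has measure 1. -/
noncomputable def haarQ : Measure ℚ_[p] :=
  Measure.addHaarMeasure ⟨⟨Metric.closedBall 0 1, isCompact_closedBall 0 1⟩,
    ⟨0, mem_interior_iff_mem_nhds.2 (Metric.closedBall_mem_nhds 0 one_pos)⟩⟩

/-- Haar measure on `ℚ_p^n` normalized so that `ℤ_p^n` has measure 1. -/
noncomputable def haarQn (n : ℕ) : Measure (Fin n → ℚ_[p]) :=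
  Measure.addHaarMeasure ⟨⟨Metric.closedBall 0 1, isCompact_closedBall 0 1⟩,
    ⟨0, mem_interior_iff_mem_nhds.2 (Metric.closedBall_mem_nhds 0 one_pos)⟩⟩

/-- The p-adic fractional part of `x` : the unique rational of the form `z / p^n`
lying in `[0,1)` with `x - r ∈ ℤ_p`. -/
noncomputable def padicFract (x : ℚ_[p]) : ℚ :=
  if h : ∃ r : ℚ, (∃ (z : ℤ) (n : ℕ), r = (z : ℚ) / (p : ℚ) ^ n) ∧ 0 ≤ r ∧ r < 1 ∧
      ‖x - (r : ℚ_[p])‖ ≤ 1 then h.choose else 0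

/-- The standard additive character `χ(y) = exp(2 π i {y}_p)` of `ℚ_p`. -/
noncomputable def stdChar (y : ℚ_[p]) : ℂ :=
  Complex.exp (2 * Real.pi * Complex.I * (padicFract p y : ℂ))

/-- A Bruhat–Schwartz (test) function: locally constant with compact support. -/
def IsBruhatSchwartz {E : Type*} [TopologicalSpace E] (φ : E → ℂ) : Prop :=
  IsLocallyConstant φ ∧ HasCompactSupport φ

/-- Fourier transform on `ℚ_p`. -/
noncomputable def fourier1 (φ : ℚ_[p] → ℂ) (ξ : ℚ_[p]) : ℂ :=
  ∫ x, stdChar p (-(ξ * x)) * φ x ∂haarQ p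

/-- Fourier transform on `ℚ_p^n`. -/
noncomputable def fourierN (n : ℕ) (φ : (Fin n → ℚ_[p]) → ℂ) (ξ : Fin n → ℚ_[p]) : ℂ :=
  ∫ x, stdChar p (-(∑ i, ξ i * x i)) * φ x ∂haarQn p n

/-- Inverse Fourier transform on `ℚ_p^n`. -/
noncomputable def fourierInvN (n : ℕ) (φ : (Fin n → ℚ_[p]) → ℂ) (x : Fin n → ℚ_[p]) : ℂ :=
  ∫ ξ, stdChar p (∑ i, x i * ξ i) * φ ξ ∂haarQn p n

/-- The elliptic quadratic form `f(x) = x₁² - a x₂² - p x₃² + a p x₄²`. -/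
noncomputable def Qf (a : ℤ) (x : Fin 4 → ℚ_[p]) : ℚ_[p] :=
  x 0 ^ 2 - (a : ℚ_[p]) * x 1 ^ 2 - (p : ℚ_[p]) * x 2 ^ 2 + (a : ℚ_[p]) * (p : ℚ_[p]) * x 3 ^ 2

/-- The dual elliptic quadratic form `f°(x) = a p x₁² - p x₂² - a x₃² + x₄²`. -/
noncomputable def QfCirc (a : ℤ) (x : Fin 4 → ℚ_[p]) : ℚ_[p] :=
  (a : ℚ_[p]) * (p : ℚ_[p]) * x 0 ^ 2 - (p : ℚ_[p]) * x 1 ^ 2 - (a : ℚ_[p]) * x 2 ^ 2 + x 3 ^ 2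

/-!
Because `a` is a non-residue, `‖u² - a v²‖ = max (‖u‖, ‖v‖)²` on `ℚ_p`. Writing
`f(x) = (x₁² - a x₂²) - p (x₃² - a x₄²)`, the two summands have norms that are even and odd powers
of `p` respectively, so they never cancel and `‖f(x)‖ ≥ ‖x‖² / p`. As `φ` is bounded and equal to
`φ(0)` on a ball `‖x‖ ≤ p^k`, the integrand is dominated by `C ‖x‖^(-2 (Re α + 2))` off that ball.
Since the ball of radius `p^(k+1)` is covered by `p⁴` translates of the ball of radius `p^k`, the
shells `p^(k+m) < ‖x‖ ≤ p^(k+m+1)` contribute a geometric series of ratio `p^(4 - 2 (Re α + 2)) < 1`.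
-/

instance (n : ℕ) : (haarQn p n).IsAddHaarMeasure := by unfold haarQn; infer_instance

open Metric Set
open scoped ENNReal

variable {p}

namespace Padic

section Nonresidue

variable {a : ℤ} (ha : legendreSym p a = -1)
include ha

theorem norm_intCast_eq_one_of_legendreSym_eq_neg_one : ‖(a : ℚ_[p])‖ = 1 := by
  refine le_antisymm (norm_int_le_one a) (not_lt.1 fun h => (legendreSym.eq_neg_one_iff p).1 ha ?_)
  rw [(ZMod.intCast_zmod_eq_zero_iff_dvd a p).2 (norm_intCast_lt_one_iff.1 h)]
  exact IsSquare.zero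

theorem norm_sq_sub_intCast_of_legendreSym_eq_neg_one (w : ℚ_[p]) :
    ‖w ^ 2 - a‖ = max ‖w‖ 1 ^ 2 := by
  have hnorm_a := norm_intCast_eq_one_of_legendreSym_eq_neg_one ha
  rcases le_or_gt ‖w‖ 1 with hw | hw
  · rw [max_eq_right hw, one_pow]
    refine le_antisymm ?_ (not_lt.1 fun h => (legendreSym.eq_neg_one_iff p).1 ha ?_)
    · rw [sub_eq_add_neg]
      refine (nonarchimedean _ _).trans (max_le ?_ (by rw [norm_neg, hnorm_a]))
      rw [norm_pow]
      exact pow_le_one₀ (norm_nonneg w) hw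
    · -- `w² ≡ a (mod p)` would make `a` a square mod `p`.
      set u : ℤ_[p] := ⟨w, hw⟩
      have hu : u ^ 2 - a ∈ RingHom.ker PadicInt.toZMod := by
        rw [PadicInt.ker_toZMod, IsLocalRing.mem_maximalIdeal,
          PadicInt.mem_nonunits]
        exact_mod_cast h
      rw [RingHom.mem_ker, map_sub, map_pow, map_intCast, sub_eq_zero] at hu
      exact ⟨PadicInt.toZMod u, by rw [← hu, sq]⟩
  · have hlt : ‖(a : ℚ_[p])‖ < ‖w ^ 2‖ := by
      rw [hnorm_a, norm_pow]
      exact one_lt_pow₀ hw two_ne_zero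
    rw [max_eq_left hw.le, sub_eq_add_neg, add_comm,
      add_eq_max_of_ne (by rw [norm_neg]; exact hlt.ne),
      norm_neg, max_eq_right hlt.le, norm_pow]

theorem norm_sq_sub_intCast_mul_sq_of_legendreSym_eq_neg_one (u v : ℚ_[p]) :
    ‖u ^ 2 - a * v ^ 2‖ = max ‖u‖ ‖v‖ ^ 2 := by
  rcases eq_or_ne v 0 with rfl | hv
  · simp
  have hv' : 0 < ‖v‖ := norm_pos_iff.2 hv
  calc ‖u ^ 2 - a * v ^ 2‖ = ‖v‖ ^ 2 * ‖(u / v) ^ 2 - a‖ := by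
        rw [← norm_pow, ← norm_mul]; congr 1; field_simp
    _ = max ‖u‖ ‖v‖ ^ 2 := by
        rw [norm_sq_sub_intCast_of_legendreSym_eq_neg_one ha, ← mul_pow,
          mul_max_of_nonneg _ _ hv'.le,
          norm_div, mul_div_cancel₀ _ hv'.ne', mul_one, max_comm]

end Nonresidue

theorem eq_zero_of_norm_sq_eq_inv_mul_norm_sq {y z : ℚ_[p]}
    (h : ‖y‖ ^ 2 = (p : ℝ)⁻¹ * ‖z‖ ^ 2) : y = 0 ∧ z = 0 := by
  have hp : (1 : ℝ) < p := mod_cast (Fact.out : p.Prime).one_lt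
  rcases eq_or_ne y 0 with rfl | hy <;> rcases eq_or_ne z 0 with rfl | hz
  · exact ⟨rfl, rfl⟩
  · simp [hz, (Fact.out : p.Prime).ne_zero] at h
  · simp [hy] at h
  · exfalso
    -- `‖y‖²` is an even and `p⁻¹ ‖z‖²` an odd power of `p`.
    rw [norm_eq_zpow_neg_valuation hy, norm_eq_zpow_neg_valuation hz, ← zpow_natCast,
      ← zpow_natCast, ← zpow_mul, ← zpow_mul, ← zpow_neg_one, ← zpow_add₀ (by positivity)] at h
    have := zpow_right_injective₀ (by positivity) hp.ne' h
    omega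

theorem exists_norm_sub_natCast_mul_zpow_le (k : ℤ) {x : ℚ_[p]} (hx : ‖x‖ ≤ (p : ℝ) ^ (k + 1)) :
    ∃ m : Fin p, ‖x - (m : ℕ) * (p : ℚ_[p]) ^ (-(k + 1))‖ ≤ (p : ℝ) ^ k := by
  have hp : (p : ℝ) ≠ 0 := mod_cast (Fact.out : p.Prime).ne_zero
  have hp' : (p : ℚ_[p]) ≠ 0 := mod_cast (Fact.out : p.Prime).ne_zero
  have hy : ‖(p : ℚ_[p]) ^ (k + 1) * x‖ ≤ 1 := by
    rw [norm_mul, norm_p_zpow]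
    calc (p : ℝ) ^ (-(k + 1)) * ‖x‖ ≤ (p : ℝ) ^ (-(k + 1)) * (p : ℝ) ^ (k + 1) := by gcongr
      _ = 1 := by rw [← zpow_add₀ hp, neg_add_cancel, zpow_zero]
  obtain ⟨y, hy⟩ : ∃ y : ℤ_[p], (y : ℚ_[p]) = (p : ℚ_[p]) ^ (k + 1) * x := ⟨⟨_, hy⟩, rfl⟩
  obtain ⟨m, hm, hmem⟩ := PadicInt.exists_mem_range y
  rw [IsLocalRing.mem_maximalIdeal, PadicInt.mem_nonunits, PadicInt.norm_def,
    PadicInt.coe_sub, PadicInt.coe_natCast, hy] at hmem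
  have hdist : ‖(p : ℚ_[p]) ^ (k + 1) * x - m‖ ≤ (p : ℝ) ^ (-1 : ℤ) :=
    (norm_le_pow_iff_norm_lt_pow_add_one _ _).2 (by simpa using hmem)
  refine ⟨⟨m, hm⟩, ?_⟩
  have heq : x - (m : ℚ_[p]) * (p : ℚ_[p]) ^ (-(k + 1))
      = (p : ℚ_[p]) ^ (-(k + 1)) * ((p : ℚ_[p]) ^ (k + 1) * x - m) := by
    rw [mul_sub, ← mul_assoc, ← zpow_add₀ hp', neg_add_cancel, zpow_zero, one_mul, mul_comm]
  rw [heq, norm_mul, norm_p_zpow, neg_neg]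
  calc (p : ℝ) ^ (k + 1) * ‖(p : ℚ_[p]) ^ (k + 1) * x - m‖
      ≤ (p : ℝ) ^ (k + 1) * (p : ℝ) ^ (-1 : ℤ) := by gcongr
    _ = (p : ℝ) ^ k := by rw [← zpow_add₀ hp, add_neg_cancel_right]

end Padic

section EllipticForm

variable {a : ℤ} (ha : legendreSym p a = -1)
include ha

theorem norm_Qf (x : Fin 4 → ℚ_[p]) :
    ‖Qf p a x‖ = max (max ‖x 0‖ ‖x 1‖ ^ 2) ((p : ℝ)⁻¹ * max ‖x 2‖ ‖x 3‖ ^ 2) := by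
  set N₁ : ℚ_[p] := x 0 ^ 2 - a * x 1 ^ 2
  set N₂ : ℚ_[p] := -(p * (x 2 ^ 2 - a * x 3 ^ 2))
  have hQf : Qf p a x = N₁ + N₂ := by simp only [Qf, N₁, N₂]; ring
  have h₁ : ‖N₁‖ = max ‖x 0‖ ‖x 1‖ ^ 2 :=
    Padic.norm_sq_sub_intCast_mul_sq_of_legendreSym_eq_neg_one ha (x 0) (x 1)
  have h₂ : ‖N₂‖ = (p : ℝ)⁻¹ * max ‖x 2‖ ‖x 3‖ ^ 2 := by
    rw [norm_neg, norm_mul, Padic.norm_p,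
      Padic.norm_sq_sub_intCast_mul_sq_of_legendreSym_eq_neg_one ha]
  rw [hQf, ← h₁, ← h₂]
  by_cases heq : ‖N₁‖ = ‖N₂‖
  · obtain ⟨y, hy⟩ : ∃ y, ‖y‖ = max ‖x 0‖ ‖x 1‖ :=
      (max_choice ‖x 0‖ ‖x 1‖).elim (fun h => ⟨x 0, h.symm⟩) (fun h => ⟨x 1, h.symm⟩)
    obtain ⟨z, hz⟩ : ∃ z, ‖z‖ = max ‖x 2‖ ‖x 3‖ :=
      (max_choice ‖x 2‖ ‖x 3‖).elim (fun h => ⟨x 2, h.symm⟩) (fun h => ⟨x 3, h.symm⟩)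
    obtain ⟨rfl, -⟩ := Padic.eq_zero_of_norm_sq_eq_inv_mul_norm_sq (y := y) (z := z)
      (by rw [hy, hz, ← h₁, ← h₂, heq])
    have hN₁ : N₁ = 0 := by rw [← norm_eq_zero, h₁, ← hy, norm_zero, sq, zero_mul]
    have hN₂ : N₂ = 0 := by rw [← norm_eq_zero, ← heq, hN₁, norm_zero]
    simp [hN₁, hN₂]
  · exact Padic.add_eq_max_of_ne heq

theorem norm_sq_div_le_norm_Qf (x : Fin 4 → ℚ_[p]) : ‖x‖ ^ 2 / p ≤ ‖Qf p a x‖ := by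
  have hp : (1 : ℝ) ≤ p := mod_cast (Fact.out : p.Prime).one_lt.le
  have hx : ‖x‖ ≤ max (max ‖x 0‖ ‖x 1‖) (max ‖x 2‖ ‖x 3‖) := by
    refine (pi_norm_le_iff_of_nonneg (by positivity)).2 fun i => ?_
    fin_cases i <;> simp
  rw [norm_Qf ha]
  rcases le_total (max ‖x 0‖ ‖x 1‖) (max ‖x 2‖ ‖x 3‖) with h | h
  · rw [max_eq_right h] at hx
    calc ‖x‖ ^ 2 / p ≤ (p : ℝ)⁻¹ * max ‖x 2‖ ‖x 3‖ ^ 2 := by rw [div_eq_inv_mul]; gcongr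
      _ ≤ _ := le_max_right _ _
  · rw [max_eq_left h] at hx
    calc ‖x‖ ^ 2 / p ≤ max ‖x 0‖ ‖x 1‖ ^ 2 / p := by gcongr
      _ ≤ max ‖x 0‖ ‖x 1‖ ^ 2 := div_le_self (sq_nonneg _) hp
      _ ≤ _ := le_max_left _ _

end EllipticForm

theorem compl_closedBall_zpow_subset_iUnion {E : Type*} [SeminormedAddGroup E] {q : ℝ}
    (hq : 1 < q) (k : ℤ) :
    (closedBall (0 : E) (q ^ k))ᶜ ⊆
      ⋃ m : ℕ, closedBall 0 (q ^ (k + (m + 1 : ℕ))) \ closedBall 0 (q ^ (k + m)) := by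
  intro x hx
  have hxk : q ^ k < ‖x‖ := by simpa using hx
  obtain ⟨j, hj, hj'⟩ := exists_mem_Ioc_zpow ((zpow_pos (zero_lt_one.trans hq) k).trans hxk) hq
  have hkj : k ≤ j := by
    have := hxk.trans_le hj'
    rw [zpow_lt_zpow_iff_right₀ hq] at this
    omega
  have hm : ((j - k).toNat : ℤ) = j - k := Int.toNat_of_nonneg (by omega)
  refine mem_iUnion.2 ⟨(j - k).toNat, ?_, ?_⟩
  · simpa [Nat.cast_succ, ← add_assoc, hm] using hj'
  · simpa [hm] using hj

section HaarMeasure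

variable {n : ℕ}

theorem closedBall_zpow_succ_subset_iUnion (k : ℤ) :
    closedBall (0 : Fin n → ℚ_[p]) ((p : ℝ) ^ (k + 1)) ⊆
      ⋃ m : Fin n → Fin p, closedBall (fun i => ((m i : ℕ) : ℚ_[p]) * (p : ℚ_[p]) ^ (-(k + 1)))
        ((p : ℝ) ^ k) := by
  intro x hx
  rw [mem_closedBall_zero_iff] at hx
  choose m hm using fun i =>
    Padic.exists_norm_sub_natCast_mul_zpow_le k ((norm_le_pi_norm x i).trans hx)
  exact mem_iUnion.2 ⟨m, by
    rw [mem_closedBall, dist_eq_norm]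
    exact (pi_norm_le_iff_of_nonneg (by positivity)).2 hm⟩

variable (μ : Measure (Fin n → ℚ_[p])) [μ.IsAddHaarMeasure]

theorem measure_closedBall_zpow_succ_le (k : ℤ) :
    μ (closedBall 0 ((p : ℝ) ^ (k + 1))) ≤ (p : ℝ≥0∞) ^ n * μ (closedBall 0 ((p : ℝ) ^ k)) := by
  calc μ (closedBall 0 ((p : ℝ) ^ (k + 1)))
      ≤ ∑ m : Fin n → Fin p, μ (closedBall (fun i => ((m i : ℕ) : ℚ_[p]) * (p : ℚ_[p]) ^ (-(k + 1)))
          ((p : ℝ) ^ k)) :=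
        (measure_mono (closedBall_zpow_succ_subset_iUnion k)).trans (measure_iUnion_fintype_le _ _)
    _ = (p : ℝ≥0∞) ^ n * μ (closedBall 0 ((p : ℝ) ^ k)) := by
        simp [Measure.addHaar_closedBall_center]

theorem measure_closedBall_zpow_add_le (k : ℤ) (m : ℕ) :
    μ (closedBall 0 ((p : ℝ) ^ (k + m))) ≤
      (p : ℝ≥0∞) ^ (n * m) * μ (closedBall 0 ((p : ℝ) ^ k)) := by
  induction m with
  | zero => simp
  | succ m ih =>
    calc μ (closedBall 0 ((p : ℝ) ^ (k + (m + 1 : ℕ))))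
        ≤ (p : ℝ≥0∞) ^ n * μ (closedBall 0 ((p : ℝ) ^ (k + m))) := by
          rw [Nat.cast_succ, ← add_assoc]; exact measure_closedBall_zpow_succ_le μ _
      _ ≤ (p : ℝ≥0∞) ^ n * ((p : ℝ≥0∞) ^ (n * m) * μ (closedBall 0 ((p : ℝ) ^ k))) := by gcongr
      _ = (p : ℝ≥0∞) ^ (n * (m + 1)) * μ (closedBall 0 ((p : ℝ) ^ k)) := by ring

theorem setLIntegral_norm_rpow_neg_shell_le {s : ℝ} (hs : 0 ≤ s) (k : ℤ) (m : ℕ) :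
    ∫⁻ x in closedBall 0 ((p : ℝ) ^ (k + (m + 1 : ℕ))) \ closedBall 0 ((p : ℝ) ^ (k + m)),
        ENNReal.ofReal (‖x‖ ^ (-s)) ∂μ ≤
      ENNReal.ofReal ((p : ℝ) ^ (n - s * k)) * ENNReal.ofReal ((p : ℝ) ^ (n - s)) ^ m *
        μ (closedBall 0 ((p : ℝ) ^ k)) := by
  have hp₀ : (0 : ℝ) < p := mod_cast (Fact.out : p.Prime).pos
  have key : ((p : ℝ) ^ (k + m)) ^ (-s) * (p : ℝ) ^ (n * (m + 1))
      = (p : ℝ) ^ (n - s * k) * ((p : ℝ) ^ (n - s)) ^ m := by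
    rw [← Real.rpow_intCast, ← Real.rpow_mul hp₀.le, ← Real.rpow_natCast,
      ← Real.rpow_natCast (_ ^ _), ← Real.rpow_mul hp₀.le, ← Real.rpow_add hp₀,
      ← Real.rpow_add hp₀]
    congr 1
    push_cast
    ring
  calc _ ≤ ∫⁻ _ in closedBall 0 ((p : ℝ) ^ (k + (m + 1 : ℕ))),
        ENNReal.ofReal (((p : ℝ) ^ (k + m)) ^ (-s)) ∂μ := by
        refine (setLIntegral_mono measurable_const fun x hx => ENNReal.ofReal_le_ofReal ?_).trans
          (lintegral_mono_set sdiff_subset)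
        have hx' : (p : ℝ) ^ (k + m) < ‖x‖ := by simpa using hx.2
        exact Real.rpow_le_rpow_of_nonpos (zpow_pos hp₀ _) hx'.le (by linarith)
    _ ≤ ENNReal.ofReal (((p : ℝ) ^ (k + m)) ^ (-s)) *
          ((p : ℝ≥0∞) ^ (n * (m + 1)) * μ (closedBall 0 ((p : ℝ) ^ k))) := by
        rw [setLIntegral_const]
        gcongr
        exact measure_closedBall_zpow_add_le μ k (m + 1)
    _ = _ := by
        rw [← mul_assoc, ← ENNReal.ofReal_natCast, ← ENNReal.ofReal_pow hp₀.le,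
          ← ENNReal.ofReal_mul (by positivity), key, ENNReal.ofReal_mul (by positivity),
          ENNReal.ofReal_pow (by positivity)]

theorem integrableOn_norm_rpow_neg_compl_closedBall {s : ℝ} (hs : n < s) (k : ℤ) :
    IntegrableOn (fun x => ‖x‖ ^ (-s)) (closedBall (0 : Fin n → ℚ_[p]) ((p : ℝ) ^ k))ᶜ μ := by
  have hp : (1 : ℝ) < p := mod_cast (Fact.out : p.Prime).one_lt
  have hr : ENNReal.ofReal ((p : ℝ) ^ (n - s)) < 1 :=
    ENNReal.ofReal_lt_one.2 (Real.rpow_lt_one_of_one_lt_of_neg hp (by linarith))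
  refine ⟨(by fun_prop : Measurable fun x : Fin n → ℚ_[p] => ‖x‖ ^ (-s)).aestronglyMeasurable,
    (hasFiniteIntegral_iff_ofReal (ae_of_all _ fun x => by positivity)).2 ?_⟩
  calc _ ≤ ∑' m : ℕ, ∫⁻ x in closedBall 0 ((p : ℝ) ^ (k + (m + 1 : ℕ))) \
          closedBall 0 ((p : ℝ) ^ (k + m)), ENNReal.ofReal (‖x‖ ^ (-s)) ∂μ :=
        (lintegral_mono_set (compl_closedBall_zpow_subset_iUnion hp k)).trans
          (lintegral_iUnion_le _ _)
    _ ≤ ∑' m : ℕ, ENNReal.ofReal ((p : ℝ) ^ (n - s * k)) *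
          ENNReal.ofReal ((p : ℝ) ^ (n - s)) ^ m * μ (closedBall 0 ((p : ℝ) ^ k)) :=
        ENNReal.tsum_le_tsum fun m =>
          setLIntegral_norm_rpow_neg_shell_le μ ((Nat.cast_nonneg n).trans hs.le) k m
    _ < ⊤ := by
        rw [ENNReal.tsum_mul_right, ENNReal.tsum_mul_left, ENNReal.tsum_geometric]
        exact ENNReal.mul_lt_top (ENNReal.mul_lt_top ENNReal.ofReal_lt_top
          (ENNReal.inv_lt_top.2 (tsub_pos_of_lt hr))) measure_closedBall_lt_top

end HaarMeasure

theorem IsLocallyConstant.exists_zpow_forall_mem_closedBall_eq {E X : Type*}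
    [SeminormedAddCommGroup E] {φ : E → X} (hφ : IsLocallyConstant φ) {q : ℝ} (hq : 1 < q) :
    ∃ k : ℤ, ∀ x ∈ closedBall (0 : E) (q ^ k), φ x = φ 0 := by
  obtain ⟨ε, hε, hball⟩ := Metric.isOpen_iff.1 (hφ.isOpen_fiber (φ 0)) 0 rfl
  obtain ⟨m, hm⟩ := exists_pow_lt_of_lt_one hε (inv_lt_one_of_one_lt₀ hq)
  refine ⟨-m, fun x hx => hball (mem_ball_zero_iff.2 ((mem_closedBall_zero_iff.1 hx).trans_lt ?_))⟩
  rwa [zpow_neg, zpow_natCast, ← inv_pow]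

theorem norm_cpow_norm_Qf_le {a : ℤ} (ha : legendreSym p a = -1) {α : ℂ} (hα : -2 ≤ α.re)
    {x : Fin 4 → ℚ_[p]} (hx : x ≠ 0) :
    ‖(‖Qf p a x‖ : ℂ) ^ (-α - 2)‖ ≤ (p : ℝ) ^ (α.re + 2) * ‖x‖ ^ (-(2 * (α.re + 2))) := by
  have hp₀ : (0 : ℝ) < p := mod_cast (Fact.out : p.Prime).pos
  have hlow : 0 < ‖x‖ ^ 2 / p := by have := norm_pos_iff.2 hx; positivity
  rw [norm_cpow_eq_rpow_re_of_pos (hlow.trans_le (norm_sq_div_le_norm_Qf ha x))]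
  calc ‖Qf p a x‖ ^ (-α - 2).re ≤ (‖x‖ ^ 2 / p) ^ (-(α.re + 2)) := by
        rw [show (-α - 2).re = -(α.re + 2) by simp; ring]
        exact Real.rpow_le_rpow_of_nonpos hlow (norm_sq_div_le_norm_Qf ha x) (by linarith)
    _ = (p : ℝ) ^ (α.re + 2) * ‖x‖ ^ (-(2 * (α.re + 2))) := by
        rw [Real.div_rpow (by positivity) hp₀.le, ← Real.rpow_natCast,
          ← Real.rpow_mul (norm_nonneg x),
          Real.rpow_neg hp₀.le, div_inv_eq_mul, mul_comm]
        push_cast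
        ring_nf

theorem regularized_integral_convergent_general (p : ℕ) [Fact p.Prime]
    (a : ℤ) (ha : legendreSym p a = -1)
    (φ : (Fin 4 → ℚ_[p]) → ℂ) (hφ : IsBruhatSchwartz φ)
    (α : ℂ) (hα : 0 < α.re) :
    Integrable (fun x : Fin 4 → ℚ_[p] => (φ x - φ 0) * ((‖Qf p a x‖ : ℂ) ^ (-α - 2)))
      (haarQn p 4) := by
  obtain ⟨hlc, hcs⟩ := hφ
  have hp : (1 : ℝ) < p := mod_cast (Fact.out : p.Prime).one_lt
  obtain ⟨k, hk⟩ := hlc.exists_zpow_forall_mem_closedBall_eq hp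
  obtain ⟨C, hC⟩ := hcs.exists_bound_of_continuous hlc.continuous
  have hdom : Integrable (fun x => 2 * C * (p : ℝ) ^ (α.re + 2) *
      (closedBall 0 ((p : ℝ) ^ k))ᶜ.indicator (fun x => ‖x‖ ^ (-(2 * (α.re + 2)))) x)
      (haarQn p 4) :=
    ((integrable_indicator_iff isClosed_closedBall.measurableSet.compl).2
      (integrableOn_norm_rpow_neg_compl_closedBall _ (by push_cast; linarith) k)).const_mul _
  have hQf : Continuous (Qf p a) := by unfold Qf; fun_prop
  have hφc : Continuous φ := hlc.continuous
  refine hdom.mono' (by fun_prop : Measurable _).aestronglyMeasurable (ae_of_all _ fun x => ?_)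
  by_cases hx : x ∈ closedBall 0 ((p : ℝ) ^ k)
  · simp [hk x hx, hx]
  have hx₀ : x ≠ 0 := by rintro rfl; exact hx (mem_closedBall_self (by positivity))
  rw [indicator_of_mem (mem_compl hx), norm_mul, mul_assoc]
  exact mul_le_mul ((norm_sub_le _ _).trans (by linarith [hC x, hC 0]))
    (norm_cpow_norm_Qf_le ha (by linarith) hx₀) (norm_nonneg _)
    (by linarith [norm_nonneg (φ 0), hC 0])

/-- For a Bruhat–Schwartz function `φ` and `Re α > 0`, the integral
`∫ (φ(x) - φ(0)) |f(x)|_p^{-α-2} d⁴x` converges absolutely. -/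
theorem regularized_integral_convergent (p : ℕ) [Fact p.Prime] (hp : p ≠ 2)
    (a : ℤ) (ha : legendreSym p a = -1)
    (φ : (Fin 4 → ℚ_[p]) → ℂ) (hφ : IsBruhatSchwartz φ)
    (α : ℂ) (hα : 0 < α.re) :
    Integrable (fun x : Fin 4 → ℚ_[p] => (φ x - φ 0) * ((‖Qf p a x‖ : ℂ) ^ (-α - 2)))
      (haarQn p 4) :=
  regularized_integral_convergent_general p a ha φ hφ α hα
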